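/- arXiv:1905.02641 — 3 statements merged into one kernel-verified Lean document; each statement's English description precedes it below -/
import Mathlib

section
/- For every real a > 0 and every p ∈ (0,1), (1-p)·(1 - exp(-a)) ≥ (exp(-a) + (1-p)(1 - exp(-a)) - exp(-p·a)) / (1 - exp(-p·a)). -/
/-!
Multiplying by `1 - e^{-pa} > 0` and writing `q = 1 - p`, `e^{-a} = e^{-pa} e^{-qa}`, the claim becomes
`e^{-pa} (e^{-qa} + q (1 - e^{-a}) - 1) ≤ 0`, and the bracket is nonpositive because the convex
function `exp` lies below its chord between `-a` and `0`.
-/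

open Real

theorem exp_mul_le_mul_exp_add_one_sub {t : ℝ} (ht₀ : 0 ≤ t) (ht₁ : t ≤ 1) (x : ℝ) :
    exp (t * x) ≤ t * exp x + (1 - t) := by
  have := convexOn_exp.2 (Set.mem_univ x) (Set.mem_univ 0) ht₀ (sub_nonneg.2 ht₁) (by ring)
  simpa only [smul_eq_mul, mul_zero, add_zero, exp_zero, mul_one] using this

theorem exp_neg_mul_add_mul_one_sub_exp_neg_le_one {q : ℝ} (hq₀ : 0 ≤ q) (hq₁ : q ≤ 1) (a : ℝ) :
    exp (-(q * a)) + q * (1 - exp (-a)) ≤ 1 := by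
  have := exp_mul_le_mul_exp_add_one_sub hq₀ hq₁ (-a)
  rw [mul_neg] at this
  linarith

/-- For every real `a > 0` and `p ∈ (0,1)`,
`(1-p)(1-e^{-a}) ≥ (e^{-a} + (1-p)(1-e^{-a}) - e^{-pa}) / (1 - e^{-pa})`. -/
theorem stmt2 (a p : ℝ) (ha : 0 < a) (hp : p ∈ Set.Ioo (0 : ℝ) 1) :
    (1 - p) * (1 - Real.exp (-a)) ≥
      (Real.exp (-a) + (1 - p) * (1 - Real.exp (-a)) - Real.exp (-p * a)) /
        (1 - Real.exp (-p * a)) := by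
  obtain ⟨hp₀, hp₁⟩ := hp
  have hden : 0 < 1 - exp (-p * a) := by
    rw [sub_pos, exp_lt_one_iff, neg_mul, neg_lt_zero]
    exact mul_pos hp₀ ha
  have hsplit : exp (-a) = exp (-p * a) * exp (-((1 - p) * a)) := by
    rw [← exp_add]; ring_nf
  have hchord := exp_neg_mul_add_mul_one_sub_exp_neg_le_one (sub_nonneg.2 hp₁.le) (by linarith) a
  rw [ge_iff_le, div_le_iff₀ hden]
  linear_combination exp (-p * a) * hchord + hsplit
end

section
/- Let q : ℕ → ℝ be nonnegative with ∑_{k=0}^∞ q(k) = 1, suppose the series γ := ∑_{k=0}^∞ k·q(k) converges, let g(x) := ∑_{k=0}^∞ q(k)·xᵏ, and define x₀ := 0 and x_{n+1} := g(x_n). Then for every n ∈ ℕ one has 0 ≤ x_n ≤ 1 and 1 - x_n ≤ γⁿ. -/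
/-!
By Bernoulli's inequality `1 - yᵏ ≤ k (1 - y)` on `[0, 1]`, summing against `q` gives
`1 - g(y) ≤ γ (1 - y)`: the map `g` preserves `[0, 1]` and shrinks the distance to `1` by the
factor `γ`, so `n` iterations starting from `0` leave a distance at most `γⁿ`.
-/

open Set

noncomputable def pgf (q : ℕ → ℝ) (y : ℝ) : ℝ := ∑' k, q k * y ^ k

section ProbabilityGeneratingFunction

variable {q : ℕ → ℝ} {y : ℝ}

lemma hasSum_pgf (hq : ∀ k, 0 ≤ q k) (hq1 : HasSum q 1) (hy : y ∈ Icc 0 1) :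
    HasSum (fun k => q k * y ^ k) (pgf q y) :=
  (hq1.summable.of_nonneg_of_le (fun k => mul_nonneg (hq k) (pow_nonneg hy.1 k))
    fun k => mul_le_of_le_one_right (hq k) (pow_le_one₀ hy.1 hy.2)).hasSum

lemma pgf_mem_Icc (hq : ∀ k, 0 ≤ q k) (hq1 : HasSum q 1) (hy : y ∈ Icc 0 1) :
    pgf q y ∈ Icc 0 1 :=
  ⟨(hasSum_pgf hq hq1 hy).nonneg fun k => mul_nonneg (hq k) (pow_nonneg hy.1 k),
    hasSum_le (fun k => mul_le_of_le_one_right (hq k) (pow_le_one₀ hy.1 hy.2))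
      (hasSum_pgf hq hq1 hy) hq1⟩

lemma one_sub_pgf_le {γ : ℝ} (hq : ∀ k, 0 ≤ q k) (hq1 : HasSum q 1)
    (hγ : HasSum (fun k : ℕ => (k : ℝ) * q k) γ) (hy : y ∈ Icc 0 1) :
    1 - pgf q y ≤ γ * (1 - y) := by
  have hbernoulli (k : ℕ) : q k - q k * y ^ k ≤ (k : ℝ) * q k * (1 - y) := by
    have := one_add_mul_sub_le_pow (by linarith [hy.1] : (-1 : ℝ) ≤ y) k
    nlinarith [hq k]
  simpa [mul_comm γ] using hasSum_le hbernoulli (hq1.sub (hasSum_pgf hq hq1 hy)) (hγ.mul_right _)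

end ProbabilityGeneratingFunction

lemma iterate_from_zero_bound {f : ℝ → ℝ} {c : ℝ} (hc : 0 ≤ c)
    (hmaps : MapsTo f (Icc 0 1) (Icc 0 1)) (hf : ∀ y ∈ Icc (0 : ℝ) 1, 1 - f y ≤ c * (1 - y))
    {x : ℕ → ℝ} (hx0 : x 0 = 0) (hxs : ∀ n, x (n + 1) = f (x n)) :
    ∀ n, x n ∈ Icc (0 : ℝ) 1 ∧ 1 - x n ≤ c ^ n := by
  intro n
  induction n with
  | zero => simp [hx0]
  | succ n ih =>
    obtain ⟨hxn, hpow⟩ := ih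
    refine ⟨hxs n ▸ hmaps hxn, ?_⟩
    calc 1 - x (n + 1) ≤ c * (1 - x n) := hxs n ▸ hf _ hxn
      _ ≤ c * c ^ n := mul_le_mul_of_nonneg_left hpow hc
      _ = c ^ (n + 1) := (pow_succ' c n).symm

/-- Let `q : ℕ → ℝ` be nonnegative with `∑ q(k) = 1`, suppose the mean series
`γ := ∑ k q(k)` converges, let `g(x) := ∑ q(k) xᵏ`, and define `x₀ := 0`,
`x_{n+1} := g(x_n)`. Then for every `n`, `0 ≤ x_n ≤ 1` and `1 - x_n ≤ γⁿ`. -/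
theorem stmt14 (q : ℕ → ℝ) (hq : ∀ k, 0 ≤ q k) (hsum : ∑' k : ℕ, q k = 1)
    (hmean : Summable fun k : ℕ => (k : ℝ) * q k)
    (x : ℕ → ℝ) (hx0 : x 0 = 0) (hxs : ∀ n : ℕ, x (n + 1) = ∑' k : ℕ, q k * x n ^ k) :
    ∀ n : ℕ, x n ∈ Set.Icc (0 : ℝ) 1 ∧ 1 - x n ≤ (∑' k : ℕ, (k : ℝ) * q k) ^ n := by
  have hsummable : Summable q := by
    by_contra h
    simp [tsum_eq_zero_of_not_summable h] at hsum
  have hq1 : HasSum q 1 := hsum ▸ hsummable.hasSum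
  have hγ : 0 ≤ ∑' k : ℕ, (k : ℝ) * q k :=
    tsum_nonneg fun k => mul_nonneg k.cast_nonneg (hq k)
  exact iterate_from_zero_bound hγ (fun _ hy => pgf_mem_Icc hq hq1 hy)
    (fun _ hy => one_sub_pgf_le hq hq1 hmean.hasSum hy) hx0 hxs
end

section
/- For every γ ∈ (0,1) and every natural number m ≥ 1, ∑_{k=1}^∞ (1 - (1 - γᵏ)ᵐ) ≤ log(m)/log(1/γ) + 1 + 2/(1 - γ). -/
/-!
Every term `1 - (1 - γᵏ)ᵐ` lies in `[0, 1]` and, by Bernoulli's inequality, is at most `m γᵏ`.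
Bound the first `K = ⌈log m / log (1/γ)⌉` terms by `1` and the remaining ones by the geometric
series `m γᴷ ∑ γʲ`; the choice of `K` makes `m γᴷ ≤ 1`, so the tail is at most `1 / (1 - γ)`.
-/

theorem one_sub_one_sub_pow_le_mul {x : ℝ} (hx : x ≤ 2) (m : ℕ) :
    1 - (1 - x) ^ m ≤ m * x := by
  have := one_add_mul_le_pow (a := -x) (by linarith) m
  rw [← sub_eq_add_neg] at this
  linarith

theorem one_sub_one_sub_pow_mem_Icc {x : ℝ} (hx : x ∈ Set.Icc (0 : ℝ) 1) (m : ℕ) :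
    1 - (1 - x) ^ m ∈ Set.Icc (0 : ℝ) 1 := by
  obtain ⟨hx0, hx1⟩ := hx
  have h0 : 0 ≤ (1 - x) ^ m := pow_nonneg (by linarith) m
  have h1 : (1 - x) ^ m ≤ 1 := pow_le_one₀ (by linarith) (by linarith)
  constructor <;> linarith

section GeometricDomination

variable {f : ℕ → ℝ} {c γ : ℝ}

theorem summable_of_nonneg_of_le_geometric (hγ0 : 0 ≤ γ) (hγ1 : γ < 1)
    (hf0 : ∀ j, 0 ≤ f j) (hfc : ∀ j, f j ≤ c * γ ^ j) : Summable f :=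
  .of_nonneg_of_le hf0 hfc ((summable_geometric_of_lt_one hγ0 hγ1).mul_left c)

theorem tsum_le_of_le_one_of_le_geometric (hγ0 : 0 ≤ γ) (hγ1 : γ < 1)
    (hf0 : ∀ j, 0 ≤ f j) (hf1 : ∀ j, f j ≤ 1) (hfc : ∀ j, f j ≤ c * γ ^ j) (k : ℕ) :
    ∑' j, f j ≤ k + c * γ ^ k / (1 - γ) := by
  have hf := summable_of_nonneg_of_le_geometric hγ0 hγ1 hf0 hfc
  have hgeo := summable_geometric_of_lt_one hγ0 hγ1
  have head : ∑ j ∈ Finset.range k, f j ≤ k := by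
    simpa using Finset.sum_le_card_nsmul (Finset.range k) f 1 fun j _ => hf1 j
  have tail : ∑' j, f (j + k) ≤ c * γ ^ k / (1 - γ) :=
    calc ∑' j, f (j + k)
        ≤ ∑' j, c * γ ^ k * γ ^ j :=
          ((summable_nat_add_iff k).mpr hf).tsum_le_tsum
            (fun j => (hfc (j + k)).trans_eq (by ring)) (hgeo.mul_left _)
      _ = c * γ ^ k / (1 - γ) := by
          rw [tsum_mul_left, tsum_geometric_of_lt_one hγ0 hγ1, div_eq_mul_inv]
  rw [← hf.sum_add_tsum_nat_add k]
  linarith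

end GeometricDomination

theorem mul_pow_le_one_of_log_div_le {x γ : ℝ} (hx : 0 < x) (hγ : γ ∈ Set.Ioo (0 : ℝ) 1)
    {k : ℕ} (hk : Real.log x / Real.log (1 / γ) ≤ k) : x * γ ^ k ≤ 1 := by
  obtain ⟨hγ0, hγ1⟩ := hγ
  have hlog : 0 < Real.log (1 / γ) := Real.log_pos (by rw [lt_div_iff₀ hγ0]; linarith)
  rw [div_le_iff₀ hlog, one_div, Real.log_inv] at hk
  calc x * γ ^ k = Real.exp (Real.log x + k * Real.log γ) := by
        rw [Real.exp_add, Real.exp_nat_mul, Real.exp_log hx, Real.exp_log hγ0]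
    _ ≤ Real.exp 0 := Real.exp_le_exp.mpr (by linarith)
    _ = 1 := Real.exp_zero

/-- For every `γ ∈ (0,1)` and natural number `m ≥ 1`,
`∑_{k=1}^∞ (1 - (1-γᵏ)ᵐ) ≤ log m / log (1/γ) + 1 + 2/(1-γ)` (the sum over `k ≥ 1` is
written via the reindexing `k = j + 1`). -/
theorem stmt15 (γ : ℝ) (hγ : γ ∈ Set.Ioo (0 : ℝ) 1) (m : ℕ) (hm : 1 ≤ m) :
    Summable (fun j : ℕ => 1 - (1 - γ ^ (j + 1)) ^ m) ∧
      ∑' j : ℕ, (1 - (1 - γ ^ (j + 1)) ^ m) ≤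
        Real.log m / Real.log (1 / γ) + 1 + 2 / (1 - γ) := by
  obtain ⟨hγ0, hγ1⟩ := hγ
  have hterm (j : ℕ) : 1 - (1 - γ ^ (j + 1)) ^ m ∈ Set.Icc (0 : ℝ) 1 :=
    one_sub_one_sub_pow_mem_Icc ⟨(pow_pos hγ0 (j + 1)).le, pow_le_one₀ hγ0.le hγ1.le⟩ m
  have hgeo (j : ℕ) : 1 - (1 - γ ^ (j + 1)) ^ m ≤ m * γ * γ ^ j :=
    (one_sub_one_sub_pow_le_mul (by linarith [pow_le_one₀ (n := j + 1) hγ0.le hγ1.le]) m).trans_eq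
      (by ring)
  refine ⟨summable_of_nonneg_of_le_geometric hγ0.le hγ1 (fun j => (hterm j).1) hgeo, ?_⟩
  set L := Real.log m / Real.log (1 / γ)
  have hL : 0 ≤ L := div_nonneg (Real.log_nonneg (by exact_mod_cast hm))
    (Real.log_nonneg (by rw [le_div_iff₀ hγ0]; linarith))
  have hmγ : (m : ℝ) * γ ^ ⌈L⌉₊ ≤ 1 :=
    mul_pow_le_one_of_log_div_le (by exact_mod_cast hm) ⟨hγ0, hγ1⟩ (Nat.le_ceil L)
  have hk : (⌈L⌉₊ : ℝ) ≤ L + 1 := (Nat.ceil_lt_add_one hL).le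
  have htail : m * γ * γ ^ ⌈L⌉₊ / (1 - γ) ≤ 2 / (1 - γ) := by
    gcongr
    nlinarith
  linarith [tsum_le_of_le_one_of_le_geometric hγ0.le hγ1 (fun j => (hterm j).1)
    (fun j => (hterm j).2) hgeo ⌈L⌉₊]
end
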